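/- arXiv:2407.15024 — 6 statements merged into one kernel-verified Lean document; each statement's English description precedes it below -/
import Mathlib

section
/- For every positive integer i, the polynomial D_i := ∏_{j=0}^{i-1} (θ^{q^i} − θ^{q^j}) in 𝔽_q[θ] equals the product of all monic polynomials of degree i in 𝔽_q[θ]. -/
/-!
Both sides are monic, so it suffices that every monic irreducible `p`, of degree `d` say, occurs
in them with the same multiplicity. Since `θ^{q^i} - θ^{q^j} = (θ^{q^{i-j}} - θ)^{q^j}` and
`θ^{q^m} - θ` is squarefree and divisible by `p` exactly when `d ∣ m`, the multiplicity of `p` in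
`D_i` is `∑_{j < i, d ∣ i - j} q^j`. In the product of the monic polynomials of degree `i` it is
`∑_{k ≥ 1} #{f | p^k ∣ f} = ∑_{1 ≤ k ≤ i/d} q^{i - kd}`, as the multiples of `p^k` are
`p^k g` with `g` monic of degree `i - kd`. The substitution `j = i - kd` matches the two sums.
-/

open Polynomial Finset

open scoped Classical in
theorem emultiplicity_eq_card_filter_pow_dvd {α : Type*} [Monoid α] {p b : α} {N : ℕ}
    (h : ¬p ^ (N + 1) ∣ b) : emultiplicity p b = #{k ∈ Icc 1 N | p ^ k ∣ b} := by
  have hlt : emultiplicity p b < (N + 1 : ℕ) := emultiplicity_lt_iff_not_dvd.mpr h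
  obtain ⟨m, hm⟩ := ENat.ne_top_iff_exists.mp (ne_top_of_lt hlt)
  rw [← hm, Nat.cast_lt] at hlt
  have hfilter : {k ∈ Icc 1 N | p ^ k ∣ b} = Icc 1 m := by
    ext k
    simp only [mem_filter, mem_Icc, pow_dvd_iff_le_emultiplicity, ← hm, Nat.cast_le]
    omega
  rw [hfilter, Nat.card_Icc, ← hm, add_tsub_cancel_right]

theorem Squarefree.emultiplicity_eq_one_of_dvd {R : Type*} [CommMonoid R] {p b : R}
    (hb : Squarefree b) (hp : ¬IsUnit p) (h : p ∣ b) : emultiplicity p b = 1 :=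
  le_antisymm (((squarefree_iff_emultiplicity_le_one b).mp hb p).resolve_right hp)
    (Order.one_le_iff_pos.mpr (dvd_iff_emultiplicity_pos.mpr h))

theorem Polynomial.Monic.eq_of_forall_emultiplicity_eq {K : Type*} [Field K] {f g : K[X]}
    (hf : f.Monic) (hg : g.Monic)
    (h : ∀ p : K[X], p.Monic → Irreducible p → emultiplicity p f = emultiplicity p g) :
    f = g := by
  classical
  have hprime (p : K[X]) (hp : Prime p) : emultiplicity p f = emultiplicity p g := by
    have hassoc : Associated (normalize p) p := normalize_associated p
    rw [emultiplicity_eq_of_associated_left hassoc, emultiplicity_eq_of_associated_left hassoc]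
    exact h _ (monic_normalize hp.ne_zero) (hassoc.symm.irreducible hp.irreducible)
  refine eq_of_monic_of_associated hf hg (associated_of_dvd_dvd ?_ ?_)
  · exact (UniqueFactorizationMonoid.dvd_iff_emultiplicity_le hf.ne_zero).mpr
      fun p hp => (hprime p hp).le
  · exact (UniqueFactorizationMonoid.dvd_iff_emultiplicity_le hg.ne_zero).mpr
      fun p hp => (hprime p hp).ge

theorem sum_range_filter_dvd_sub {M : Type*} [AddCommMonoid M] {d : ℕ} (hd : 0 < d) (i : ℕ)
    (g : ℕ → M) :
    ∑ j ∈ range i with d ∣ i - j, g j = ∑ k ∈ Icc 1 (i / d), g (i - k * d) := by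
  have hkd {k : ℕ} (hk : k ∈ Icc 1 (i / d)) : d ≤ k * d ∧ k * d ≤ i :=
    ⟨Nat.le_mul_of_pos_left d (mem_Icc.mp hk).1, (Nat.le_div_iff_mul_le hd).mp (mem_Icc.mp hk).2⟩
  have hinv {j : ℕ} (hj : j ∈ {j ∈ range i | d ∣ i - j}) : i - (i - j) / d * d = j := by
    obtain ⟨hji, m, hm⟩ := mem_filter.mp hj
    rw [hm, Nat.mul_div_cancel_left m hd, mul_comm, ← hm, Nat.sub_sub_self (mem_range.mp hji).le]
  refine sum_nbij' (fun j => (i - j) / d) (fun k => i - k * d) (fun j hj => ?_) (fun k hk => ?_)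
    (fun j hj => hinv hj) (fun k hk => ?_) (fun j hj => by rw [hinv hj])
  · obtain ⟨hji, m, hm⟩ := mem_filter.mp hj
    rw [mem_range] at hji
    rw [mem_Icc, hm, Nat.mul_div_cancel_left m hd, Nat.le_div_iff_mul_le hd, mul_comm]
    rcases Nat.eq_zero_or_pos m with rfl | hm0 <;> omega
  · have := hkd hk
    rw [mem_filter, mem_range, Nat.sub_sub_self this.2]
    exact ⟨by omega, dvd_mul_left d k⟩
  · rw [Nat.sub_sub_self (hkd hk).2, Nat.mul_div_cancel _ hd]

namespace Polynomial

section MonicsOfDegree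

variable {R : Type*} [CommRing R]

theorem coeff_X_pow_add_sum_C_mul_X_pow {n : ℕ} (c : Fin n → R) (m : Fin n) :
    (X ^ n + ∑ j : Fin n, C (c j) * X ^ (j : ℕ)).coeff m = c m := by
  rw [coeff_add, coeff_X_pow, if_neg m.is_lt.ne, zero_add, finsetSum_coeff,
    sum_eq_single m (fun j _ hj => ?_) (by simp)]
  · simp
  · simp [coeff_C_mul, coeff_X_pow, Fin.val_ne_of_ne hj.symm]

theorem X_pow_add_sum_C_mul_X_pow_injective (n : ℕ) :
    Function.Injective fun c : Fin n → R => X ^ n + ∑ j : Fin n, C (c j) * X ^ (j : ℕ) :=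
  fun c c' h => by
    ext m
    rw [← coeff_X_pow_add_sum_C_mul_X_pow c, ← coeff_X_pow_add_sum_C_mul_X_pow c']
    exact congrArg (coeff · m) h

variable (R) [Fintype R]

open scoped Classical in
noncomputable def monicsOfDegree (n : ℕ) : Finset R[X] :=
  univ.image fun c : Fin n → R => X ^ n + ∑ j : Fin n, C (c j) * X ^ (j : ℕ)

variable {R}

theorem prod_monicsOfDegree (n : ℕ) :
    ∏ f ∈ monicsOfDegree R n, f = ∏ c : Fin n → R, (X ^ n + ∑ j : Fin n, C (c j) * X ^ (j : ℕ)) :=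
  by classical exact prod_image fun c _ c' _ h => X_pow_add_sum_C_mul_X_pow_injective n h

theorem card_monicsOfDegree (n : ℕ) : #(monicsOfDegree R n) = Fintype.card R ^ n := by
  classical
  rw [monicsOfDegree, card_image_of_injective _ (X_pow_add_sum_C_mul_X_pow_injective n),
    card_univ, Fintype.card_fun, Fintype.card_fin]

variable [Nontrivial R]

theorem mem_monicsOfDegree {n : ℕ} {f : R[X]} :
    f ∈ monicsOfDegree R n ↔ f.Monic ∧ f.natDegree = n := by
  classical
  constructor
  · rw [monicsOfDegree, mem_image]
    rintro ⟨c, -, rfl⟩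
    have hmonic := monic_X_pow_add (degree_sum_fin_lt c)
    refine ⟨hmonic, natDegree_eq_of_degree_eq_some ?_⟩
    rw [degree_add_eq_left_of_degree_lt] <;> rw [degree_X_pow]
    exact degree_sum_fin_lt c
  · rintro ⟨hf, rfl⟩
    rw [monicsOfDegree, mem_image]
    refine ⟨fun j => f.coeff j, mem_univ _, ?_⟩
    rw [Fin.sum_univ_eq_sum_range (fun j => C (f.coeff j) * X ^ j), ← hf.as_sum]

open scoped Classical in
theorem card_filter_dvd_monicsOfDegree {g : R[X]} (hg : g.Monic) {n : ℕ}
    (hgn : g.natDegree ≤ n) :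
    #{f ∈ monicsOfDegree R n | g ∣ f} = Fintype.card R ^ (n - g.natDegree) := by
  have himage : {f ∈ monicsOfDegree R n | g ∣ f} =
      (monicsOfDegree R (n - g.natDegree)).image (g * ·) := by
    ext f
    simp only [mem_filter, mem_image, mem_monicsOfDegree]
    constructor
    · rintro ⟨⟨hf, rfl⟩, h, rfl⟩
      have hh : h.Monic := hg.of_mul_monic_left hf
      exact ⟨h, ⟨hh, by rw [hg.natDegree_mul hh]; omega⟩, rfl⟩
    · rintro ⟨h, ⟨hh, hdeg⟩, rfl⟩
      exact ⟨⟨hg.mul hh, by rw [hg.natDegree_mul hh]; omega⟩, dvd_mul_right g h⟩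
  rw [himage, card_image_of_injective _ hg.isRegular.left, card_monicsOfDegree]

end MonicsOfDegree

section FiniteField

variable {F : Type*} [Field F] [Fintype F]

local notation "q" => Fintype.card F

theorem sub_pow_card_pow (f g : F[X]) (j : ℕ) : (f - g) ^ q ^ j = f ^ q ^ j - g ^ q ^ j := by
  induction j with
  | zero => simp
  | succ j ih =>
    rw [pow_succ, pow_mul, ih, ← FiniteField.expand_card, map_sub, FiniteField.expand_card,
      FiniteField.expand_card, ← pow_mul, ← pow_mul]

theorem X_pow_card_pow_sub_X_pow_card_pow {i j : ℕ} (hji : j ≤ i) :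
    (X ^ q ^ i - X ^ q ^ j : F[X]) = (X ^ q ^ (i - j) - X) ^ q ^ j := by
  rw [sub_pow_card_pow, ← pow_mul, ← pow_add, Nat.sub_add_cancel hji]

theorem monic_X_pow_card_pow_sub_X_pow_card_pow {i j : ℕ} (hji : j < i) :
    (X ^ q ^ i - X ^ q ^ j : F[X]).Monic :=
  monic_X_pow_sub <| by
    rw [degree_X_pow]
    exact_mod_cast Nat.pow_lt_pow_right Fintype.one_lt_card hji

theorem squarefree_X_pow_card_pow_sub_X {k : ℕ} (hk : k ≠ 0) :
    Squarefree (X ^ q ^ k - X : F[X]) := by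
  obtain ⟨n, -, hq⟩ := FiniteField.card F (ringChar F)
  refine (galois_poly_separable (ringChar F) _ ?_).squarefree
  rw [hq]
  exact dvd_pow (dvd_pow_self _ n.ne_zero) hk

theorem emultiplicity_X_pow_card_pow_sub_X {p : F[X]} (hp : Irreducible p) {k : ℕ} (hk : k ≠ 0) :
    emultiplicity p (X ^ q ^ k - X) = if p.natDegree ∣ k then 1 else 0 := by
  split_ifs with hdvd <;>
    rw [hp.natDegree_dvd_iff_dvd_X_pow_card_pow_sub_X, Nat.card_eq_fintype_card] at hdvd
  · exact (squarefree_X_pow_card_pow_sub_X hk).emultiplicity_eq_one_of_dvd hp.not_isUnit hdvd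
  · exact emultiplicity_eq_zero.mpr hdvd

theorem emultiplicity_prod_X_pow_card_pow_sub_X_pow_card_pow {p : F[X]} (hp : Irreducible p)
    (i : ℕ) :
    emultiplicity p (∏ j ∈ range i, (X ^ q ^ i - X ^ q ^ j : F[X])) =
      ∑ j ∈ range i with p.natDegree ∣ i - j, q ^ j := by
  rw [Finset.emultiplicity_prod hp.prime, Nat.cast_sum, sum_filter]
  refine sum_congr rfl fun j hj => ?_
  have hji : j < i := mem_range.mp hj
  rw [X_pow_card_pow_sub_X_pow_card_pow hji.le, emultiplicity_pow hp.prime,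
    emultiplicity_X_pow_card_pow_sub_X hp (Nat.sub_ne_zero_of_lt hji)]
  split_ifs <;> simp

open scoped Classical in
theorem emultiplicity_prod_monicsOfDegree {p : F[X]} (hp : Irreducible p) (hpm : p.Monic)
    (n : ℕ) :
    emultiplicity p (∏ f ∈ monicsOfDegree F n, f) =
      ∑ k ∈ Icc 1 (n / p.natDegree), q ^ (n - k * p.natDegree) := by
  set d := p.natDegree
  have hd : 0 < d := hp.natDegree_pos
  have hcount (f) (hf : f ∈ monicsOfDegree F n) :
      emultiplicity p f = #{k ∈ Icc 1 (n / d) | p ^ k ∣ f} := by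
    obtain ⟨hfm, hfn⟩ := mem_monicsOfDegree.mp hf
    refine emultiplicity_eq_card_filter_pow_dvd fun hdvd => ?_
    have hle := natDegree_le_of_dvd hdvd hfm.ne_zero
    rw [natDegree_pow, hfn] at hle
    exact (Nat.lt_div_mul_add hd).not_ge (by rwa [add_one_mul] at hle)
  rw [Finset.emultiplicity_prod hp.prime, sum_congr rfl hcount]
  norm_cast
  refine (sum_card_bipartiteAbove_eq_sum_card_bipartiteBelow (r := fun f k => p ^ k ∣ f)).trans
    (sum_congr rfl fun k hk => ?_)
  have hkd : k * d ≤ n := (Nat.le_div_iff_mul_le hd).mp (mem_Icc.mp hk).2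
  rw [bipartiteBelow, card_filter_dvd_monicsOfDegree (hpm.pow k) (hpm.natDegree_pow k ▸ hkd),
    hpm.natDegree_pow]

end FiniteField

end Polynomial

theorem carlitz_D_eq_prod_monic_general (F : Type*) [Field F] [Fintype F]
    (q : ℕ) (hq : q = Fintype.card F) (i : ℕ) :
    ∏ j ∈ Finset.range i, ((X : F[X]) ^ q ^ i - X ^ q ^ j) =
      ∏ c : Fin i → F, ((X : F[X]) ^ i + ∑ j : Fin i, C (c j) * X ^ (j : ℕ)) := by
  subst hq
  rw [← prod_monicsOfDegree]
  refine Monic.eq_of_forall_emultiplicity_eq ?_ ?_ fun p hpm hp => ?_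
  · exact monic_prod_of_monic _ _ fun j hj =>
      monic_X_pow_card_pow_sub_X_pow_card_pow (mem_range.mp hj)
  · exact monic_prod_of_monic _ _ fun f hf => (mem_monicsOfDegree.mp hf).1
  · rw [emultiplicity_prod_X_pow_card_pow_sub_X_pow_card_pow hp,
      emultiplicity_prod_monicsOfDegree hp hpm, sum_range_filter_dvd_sub hp.natDegree_pos]

/-- For every positive integer `i`, the Carlitz quantity
`D_i = ∏_{j=0}^{i-1} (θ^{q^i} − θ^{q^j})` in `𝔽_q[θ]` equals the product of all monic
polynomials of degree `i` (parametrized by their lower-order coefficient vectors). -/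
theorem carlitz_D_eq_prod_monic (F : Type*) [Field F] [Fintype F]
    (q : ℕ) (hq : q = Fintype.card F) (i : ℕ) (hi : 0 < i) :
    ∏ j ∈ Finset.range i, ((X : F[X]) ^ q ^ i - X ^ q ^ j) =
      ∏ c : Fin i → F, ((X : F[X]) ^ i + ∑ j : Fin i, C (c j) * X ^ (j : ℕ)) :=
  carlitz_D_eq_prod_monic_general F q hq i
end

section
/- Let v be monic irreducible of degree d in 𝔽_q[θ]. Then D_{n,v}/D_{n-1,v}^q equals (θ^{q^n} − θ)/(θ^{q^{n-d}} − θ) if n > d, equals (θ^{q^n} − θ)/v if n = d, and equals θ^{q^n} − θ if 0 < n < d. -/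
/-!
Monic polynomials of degree `n` divisible by a monic `v` of degree `d` are exactly the products
`v * g` with `g` monic of degree `n - d`, so `D_n = D_{n,v} * v ^ (q ^ (n - d)) * D_{n-d}`
for `d ≤ n`, while `D_{n,v} = D_n` for `n < d`. The theorem then follows from Carlitz's identity
`D_n = [n] * D_{n-1} ^ q` with `[n] = θ ^ (q ^ n) - θ`. To prove the latter, fix a monic
irreducible `P` of degree `e`: the splitting above gives `v_P(D_n) = q ^ (n - e) + v_P(D_{n-e})`,
hence by induction `v_P(D_n) - q * v_P(D_{n-1})` is `1` if `e ∣ n` and `0` otherwise, which is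
`v_P([n])` because `[n]` is squarefree with irreducible factors those of degree dividing `n`.
-/

open Polynomial Finset UniqueFactorizationMonoid

section Factorization

variable {α : Type*} [CommMonoidWithZero α] [UniqueFactorizationMonoid α]
  [NormalizationMonoid α] [DecidableEq α] {p x : α}

theorem factorization_eq_zero_iff_not_dvd (hp : Irreducible p) (hnp : normalize p = p)
    (hx : x ≠ 0) : factorization x p = 0 ↔ ¬p ∣ x := by
  rw [factorization_eq_count, Multiset.count_eq_zero, mem_normalizedFactors_iff' hx]
  tauto

theorem factorization_self (hp : Irreducible p) (hnp : normalize p = p) :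
    factorization p p = 1 := by
  rw [factorization_eq_count, normalizedFactors_irreducible hp, hnp, Multiset.count_singleton_self]

theorem Squarefree.factorization_le_one [Nontrivial α] (hx : Squarefree x) (p : α) :
    factorization x p ≤ 1 := by
  rw [factorization_eq_count]
  exact Multiset.nodup_iff_count_le_one.mp
    ((squarefree_iff_nodup_normalizedFactors hx.ne_zero).mp hx) p

end Factorization

namespace Polynomial

variable {F : Type*} [Field F]

theorem Monic.eq_of_forall_factorization_eq [DecidableEq F] {f g : F[X]} (hf : f.Monic)
    (hg : g.Monic)
    (h : ∀ P : F[X], P.Monic → Irreducible P → factorization f P = factorization g P) :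
    f = g := by
  refine eq_of_monic_of_associated hf hg
    (associated_of_factorization_eq f g hf.ne_zero hg.ne_zero (Finsupp.ext fun P => ?_))
  by_cases hP : Irreducible P ∧ normalize P = P
  · exact h P (hP.2 ▸ monic_normalize hP.1.ne_zero) hP.1
  · have hzero (f : F[X]) : factorization f P = 0 := by
      rw [factorization_eq_count, Multiset.count_eq_zero]
      exact fun hmem => hP ⟨irreducible_of_normalized_factor P hmem,
        normalize_normalized_factor P hmem⟩
    rw [hzero, hzero]

variable [Fintype F]

theorem factorization_X_pow_card_pow_sub_X [DecidableEq F] {P : F[X]} (hP : P.Monic)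
    (hirr : Irreducible P) {n : ℕ} (hn : n ≠ 0) :
    factorization (X ^ Fintype.card F ^ n - X : F[X]) P = if P.natDegree ∣ n then 1 else 0 := by
  have hsep : Squarefree (X ^ Fintype.card F ^ n - X : F[X]) := by
    refine (galois_poly_separable (ringChar F) _ ?_).squarefree
    rw [← CharP.cast_eq_zero_iff F, Nat.cast_pow, FiniteField.cast_card_eq_zero, zero_pow hn]
  have hdvd : P ∣ X ^ Fintype.card F ^ n - X ↔ P.natDegree ∣ n := by
    rw [hirr.natDegree_dvd_iff_dvd_X_pow_card_pow_sub_X, Nat.card_eq_fintype_card]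
  have hzero := factorization_eq_zero_iff_not_dvd hirr hP.normalize_eq_self hsep.ne_zero
  have hle := hsep.factorization_le_one P
  split_ifs with h
  · have := mt hzero.mp (not_not.mpr (hdvd.mpr h))
    omega
  · exact hzero.mpr (mt hdvd.mp h)

theorem monic_X_pow_card_pow_sub_X {n : ℕ} (hn : n ≠ 0) :
    (X ^ Fintype.card F ^ n - X : F[X]).Monic :=
  monic_X_pow_sub (by rw [degree_X]; exact_mod_cast Nat.one_lt_pow hn Fintype.one_lt_card)

end Polynomial

namespace Carlitz

open scoped Classical

variable {F : Type*} [Field F]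

noncomputable def monicOfCoeffs (n : ℕ) (c : Fin n → F) : F[X] :=
  X ^ n + ∑ j : Fin n, C (c j) * X ^ (j : ℕ)

theorem monicOfCoeffs_monic (n : ℕ) (c : Fin n → F) : (monicOfCoeffs n c).Monic :=
  monic_X_pow_add (degree_sum_fin_lt c)

theorem natDegree_monicOfCoeffs (n : ℕ) (c : Fin n → F) :
    (monicOfCoeffs n c).natDegree = n := by
  rw [monicOfCoeffs, natDegree_add_eq_left_of_degree_lt, natDegree_X_pow]
  simpa only [degree_X_pow] using degree_sum_fin_lt c

theorem coeff_monicOfCoeffs (n : ℕ) (c : Fin n → F) (j : Fin n) :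
    (monicOfCoeffs n c).coeff j = c j := by
  simp [monicOfCoeffs, coeff_X_pow, j.isLt.ne, Fin.val_inj]

theorem monicOfCoeffs_injective (n : ℕ) : Function.Injective (monicOfCoeffs (F := F) n) :=
  fun c c' h => funext fun j => by simpa only [coeff_monicOfCoeffs] using congrArg (coeff · j) h

theorem monicOfCoeffs_coeff_self {f : F[X]} (hf : f.Monic) :
    monicOfCoeffs f.natDegree (fun j => f.coeff j) = f := by
  rw [monicOfCoeffs, Fin.sum_univ_eq_sum_range (fun i => C (f.coeff i) * X ^ i), ← hf.as_sum]

variable [Fintype F]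

variable (F) in
noncomputable def monics (n : ℕ) : Finset F[X] :=
  univ.map ⟨monicOfCoeffs n, monicOfCoeffs_injective n⟩

theorem mem_monics {n : ℕ} {f : F[X]} : f ∈ monics F n ↔ f.Monic ∧ f.natDegree = n := by
  simp only [monics, mem_map, mem_univ, true_and, Function.Embedding.coeFn_mk]
  constructor
  · rintro ⟨c, rfl⟩
    exact ⟨monicOfCoeffs_monic n c, natDegree_monicOfCoeffs n c⟩
  · rintro ⟨hf, rfl⟩
    exact ⟨_, monicOfCoeffs_coeff_self hf⟩

theorem card_monics (n : ℕ) : #(monics F n) = Fintype.card F ^ n := by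
  simp [monics]

theorem prod_filter_monicOfCoeffs {n : ℕ} (p : F[X] → Prop) [DecidablePred p] :
    ∏ c ∈ univ.filter (fun c : Fin n → F => p (monicOfCoeffs n c)), monicOfCoeffs n c =
      ∏ f ∈ (monics F n).filter p, f := by
  rw [monics, filter_map, prod_map]
  rfl

variable (F) in
noncomputable def D (n : ℕ) : F[X] :=
  ∏ f ∈ monics F n, f

noncomputable def DCoprime (v : F[X]) (n : ℕ) : F[X] :=
  ∏ f ∈ (monics F n).filter (¬v ∣ ·), f

theorem D_zero : D F 0 = 1 := by
  simp [D, monics, monicOfCoeffs]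

theorem monic_D (n : ℕ) : (D F n).Monic :=
  monic_prod_of_monic _ _ fun _ hf => (mem_monics.mp hf).1

theorem monic_DCoprime (v : F[X]) (n : ℕ) : (DCoprime v n).Monic :=
  monic_prod_of_monic _ _ fun _ hf => (mem_monics.mp (mem_filter.mp hf).1).1

theorem filter_dvd_monics {P : F[X]} (hP : P.Monic) {n : ℕ} (hn : P.natDegree ≤ n) :
    (monics F n).filter (P ∣ ·) =
      (monics F (n - P.natDegree)).map ⟨(P * ·), mul_right_injective₀ hP.ne_zero⟩ := by
  ext f
  simp only [mem_filter, mem_map, mem_monics, Function.Embedding.coeFn_mk]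
  constructor
  · rintro ⟨⟨hf, rfl⟩, g, rfl⟩
    have hg := hP.of_mul_monic_left hf
    exact ⟨g, ⟨hg, by rw [hP.natDegree_mul hg]; omega⟩, rfl⟩
  · rintro ⟨g, ⟨hg, hgdeg⟩, rfl⟩
    exact ⟨⟨hP.mul hg, by rw [hP.natDegree_mul hg]; omega⟩, dvd_mul_right P g⟩

theorem D_eq_DCoprime_mul {P : F[X]} (hP : P.Monic) {n : ℕ} (hn : P.natDegree ≤ n) :
    D F n = DCoprime P n * (P ^ Fintype.card F ^ (n - P.natDegree) * D F (n - P.natDegree)) := by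
  rw [D, DCoprime, ← prod_filter_not_mul_prod_filter _ (P ∣ ·), filter_dvd_monics hP hn,
    prod_map]
  simp only [Function.Embedding.coeFn_mk]
  rw [prod_mul_distrib, prod_const, card_monics, D]

theorem DCoprime_eq_D_of_lt {P : F[X]} {n : ℕ} (hn : n < P.natDegree) :
    DCoprime P n = D F n := by
  refine prod_subset (filter_subset _ _) fun f hf hnot => absurd ?_ hnot
  refine mem_filter.mpr ⟨hf, fun hdvd => ?_⟩
  have := natDegree_le_of_dvd hdvd (mem_monics.mp hf).1.ne_zero
  rw [(mem_monics.mp hf).2] at this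
  omega

section Factorization

variable [DecidableEq F] {P : F[X]}

theorem factorization_DCoprime_self (hP : P.Monic) (hirr : Irreducible P) (n : ℕ) :
    factorization (DCoprime P n) P = 0 := by
  rw [factorization_eq_zero_iff_not_dvd hirr hP.normalize_eq_self (monic_DCoprime P n).ne_zero,
    DCoprime, hirr.prime.dvd_finsetProd_iff]
  rintro ⟨f, hf, hdvd⟩
  exact (mem_filter.mp hf).2 hdvd

theorem factorization_D_of_lt (hP : P.Monic) (hirr : Irreducible P) {n : ℕ}
    (hn : n < P.natDegree) : factorization (D F n) P = 0 := by
  rw [← DCoprime_eq_D_of_lt hn, factorization_DCoprime_self hP hirr]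

theorem factorization_D_of_le (hP : P.Monic) (hirr : Irreducible P) {n : ℕ}
    (hn : P.natDegree ≤ n) :
    factorization (D F n) P =
      Fintype.card F ^ (n - P.natDegree) + factorization (D F (n - P.natDegree)) P := by
  rw [D_eq_DCoprime_mul hP hn, factorization_mul (monic_DCoprime P n).ne_zero
    (mul_ne_zero (pow_ne_zero _ hP.ne_zero) (monic_D _).ne_zero),
    factorization_mul (pow_ne_zero _ hP.ne_zero) (monic_D _).ne_zero, factorization_pow]
  simp [factorization_DCoprime_self hP hirr, factorization_self hirr hP.normalize_eq_self]

theorem factorization_D_eq_add_mul (hP : P.Monic) (hirr : Irreducible P) {n : ℕ} (hn : n ≠ 0) :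
    factorization (D F n) P =
      (if P.natDegree ∣ n then 1 else 0) + Fintype.card F * factorization (D F (n - 1)) P := by
  induction n using Nat.strong_induction_on with
  | _ n ih =>
    have he := hirr.natDegree_pos
    rcases lt_trichotomy n P.natDegree with hlt | rfl | hgt
    · rw [factorization_D_of_lt hP hirr hlt, factorization_D_of_lt hP hirr (by omega),
        if_neg (Nat.not_dvd_of_pos_of_lt (by omega) hlt), mul_zero, add_zero]
    · rw [factorization_D_of_le hP hirr le_rfl, Nat.sub_self, factorization_D_of_lt hP hirr he,
        factorization_D_of_lt hP hirr (by omega), if_pos dvd_rfl]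
      simp
    · rw [factorization_D_of_le hP hirr hgt.le,
        factorization_D_of_le (n := n - 1) hP hirr (by omega),
        ih (n - P.natDegree) (by omega) (by omega)]
      simp only [Nat.dvd_sub_self_right, not_le.mpr hgt, or_false]
      rw [show n - P.natDegree - 1 = n - 1 - P.natDegree by omega,
        show n - P.natDegree = n - 1 - P.natDegree + 1 by omega]
      ring

end Factorization

theorem D_eq_mul_D_pow {n : ℕ} (hn : n ≠ 0) :
    D F n = (X ^ Fintype.card F ^ n - X) * D F (n - 1) ^ Fintype.card F := by
  classical
  refine (monic_D n).eq_of_forall_factorization_eq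
    ((monic_X_pow_card_pow_sub_X hn).mul ((monic_D _).pow _)) fun P hP hirr => ?_
  rw [factorization_mul (monic_X_pow_card_pow_sub_X hn).ne_zero
    (pow_ne_zero _ (monic_D _).ne_zero), factorization_pow, Finsupp.add_apply,
    Finsupp.smul_apply, smul_eq_mul,
    factorization_X_pow_card_pow_sub_X hP hirr hn, factorization_D_eq_add_mul hP hirr hn]

theorem DCoprime_mul_of_natDegree_lt {v : F[X]} (hv : v.Monic) {n : ℕ} (hn : v.natDegree < n) :
    DCoprime v n * (X ^ Fintype.card F ^ (n - v.natDegree) - X) =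
      (X ^ Fintype.card F ^ n - X) * DCoprime v (n - 1) ^ Fintype.card F := by
  have hn_split := D_eq_DCoprime_mul (F := F) hv hn.le
  have hpred_split := D_eq_DCoprime_mul (F := F) hv (n := n - 1) (by omega)
  have hn_rec := D_eq_mul_D_pow (F := F) (n := n) (by omega)
  have hnd_rec := D_eq_mul_D_pow (F := F) (n := n - v.natDegree) (by omega)
  set q := Fintype.card F
  set d := v.natDegree
  rw [show n - d - 1 = n - 1 - d by omega] at hnd_rec
  have hpred_pow : D F (n - 1) ^ q =
      DCoprime v (n - 1) ^ q * (v ^ q ^ (n - d) * D F (n - 1 - d) ^ q) := by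
    rw [hpred_split, mul_pow, mul_pow, ← pow_mul, ← pow_succ,
      show n - 1 - d + 1 = n - d by omega]
  -- after multiplication by `v ^ q ^ (n - d) * D F (n - 1 - d) ^ q` both sides equal `D F n`
  refine mul_right_cancel₀ (b := v ^ q ^ (n - d) * D F (n - 1 - d) ^ q)
    (mul_ne_zero (pow_ne_zero _ hv.ne_zero) (pow_ne_zero q (monic_D (n - 1 - d)).ne_zero)) ?_
  linear_combination -hn_split - DCoprime v n * v ^ q ^ (n - d) * hnd_rec + hn_rec +
    (X ^ q ^ n - X) * hpred_pow

theorem DCoprime_natDegree_mul_self {v : F[X]} (hv : v.Monic) (hd : 0 < v.natDegree) :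
    DCoprime v v.natDegree * v =
      (X ^ Fintype.card F ^ v.natDegree - X) * DCoprime v (v.natDegree - 1) ^ Fintype.card F := by
  have hsplit := D_eq_DCoprime_mul (F := F) hv le_rfl
  rw [Nat.sub_self, pow_zero, pow_one, D_zero, mul_one] at hsplit
  rw [← hsplit, DCoprime_eq_D_of_lt (by omega), D_eq_mul_D_pow hd.ne']

theorem DCoprime_eq_mul_pow_of_lt_natDegree {v : F[X]} {n : ℕ} (hn : n ≠ 0)
    (hnd : n < v.natDegree) :
    DCoprime v n = (X ^ Fintype.card F ^ n - X) * DCoprime v (n - 1) ^ Fintype.card F := by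
  rw [DCoprime_eq_D_of_lt hnd, DCoprime_eq_D_of_lt (by omega), D_eq_mul_D_pow hn]

end Carlitz

theorem IsFractionRing.div_eq_div_of_mul_eq {R K : Type*} [CommRing R] [Field K] [Algebra R K]
    [IsFractionRing R K] {a b c e : R} (hb : b ≠ 0) (he : e ≠ 0) (h : a * e = c * b) :
    algebraMap R K a / algebraMap R K b = algebraMap R K c / algebraMap R K e := by
  rw [div_eq_div_iff (IsFractionRing.to_map_eq_zero_iff.not.mpr hb)
    (IsFractionRing.to_map_eq_zero_iff.not.mpr he), ← map_mul, ← map_mul, h]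

open Carlitz

open scoped Classical in
/-- Let `v` be monic irreducible of degree `d` in `𝔽_q[θ]`.  In the rational function
field `𝔽_q(θ)`, the quotient `D_{n,v}/D_{n-1,v}^q` equals `(θ^{q^n} − θ)/(θ^{q^{n-d}} − θ)`
if `n > d`, equals `(θ^{q^n} − θ)/v` if `n = d`, and equals `θ^{q^n} − θ` if `0 < n < d`. -/
theorem Dnv_ratio (F : Type*) [Field F] [Fintype F]
    (q : ℕ) (hq : q = Fintype.card F)
    (v : F[X]) (hv : v.Monic) (hirr : Irreducible v)
    (d : ℕ) (hd : d = v.natDegree)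
    (Dv : ℕ → F[X])
    (hDv : ∀ n, Dv n =
      ∏ c ∈ Finset.univ.filter
          (fun c : Fin n → F => ¬ v ∣ ((X : F[X]) ^ n + ∑ j : Fin n, C (c j) * X ^ (j : ℕ))),
        ((X : F[X]) ^ n + ∑ j : Fin n, C (c j) * X ^ (j : ℕ)))
    (n : ℕ) :
    (d < n →
      algebraMap F[X] (RatFunc F) (Dv n) / (algebraMap F[X] (RatFunc F) (Dv (n - 1))) ^ q =
        (RatFunc.X ^ q ^ n - RatFunc.X) / (RatFunc.X ^ q ^ (n - d) - RatFunc.X)) ∧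
    (n = d →
      algebraMap F[X] (RatFunc F) (Dv n) / (algebraMap F[X] (RatFunc F) (Dv (n - 1))) ^ q =
        (RatFunc.X ^ q ^ n - RatFunc.X) / algebraMap F[X] (RatFunc F) v) ∧
    (0 < n → n < d →
      algebraMap F[X] (RatFunc F) (Dv n) / (algebraMap F[X] (RatFunc F) (Dv (n - 1))) ^ q =
        RatFunc.X ^ q ^ n - RatFunc.X) := by
  subst hq hd
  have hDv' (m : ℕ) : Dv m = DCoprime v m :=
    (hDv m).trans (prod_filter_monicOfCoeffs (n := m) (¬v ∣ ·))
  have hpred_ne : DCoprime v (n - 1) ^ Fintype.card F ≠ 0 :=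
    pow_ne_zero _ (monic_DCoprime v _).ne_zero
  simp only [hDv', ← map_pow]
  refine ⟨fun hdn => ?_, fun hnd => ?_, fun hn hnd => ?_⟩
  · rw [IsFractionRing.div_eq_div_of_mul_eq hpred_ne
      (monic_X_pow_card_pow_sub_X (by omega)).ne_zero (DCoprime_mul_of_natDegree_lt hv hdn)]
    simp
  · subst hnd
    rw [IsFractionRing.div_eq_div_of_mul_eq hpred_ne hv.ne_zero
      (DCoprime_natDegree_mul_self hv hirr.natDegree_pos)]
    simp
  · rw [IsFractionRing.div_eq_div_of_mul_eq hpred_ne one_ne_zero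
      ((mul_one _).trans (DCoprime_eq_mul_pow_of_lt_natDegree hn.ne' hnd))]
    simp
end

section
/- The v-adic arithmetic gamma function satisfies the reflection formula: for all z ∈ ℤ_p, Γ_{ari,v}(z) · Γ_{ari,v}(1 − z) = Γ_{ari,v}(0). -/
/-!
If `w₁ + w₂ = -1` in `ℤ_p`, the base-`q` digits of `w₁` and `w₂` are complementary,
`d₁ᵢ + d₂ᵢ = q - 1`: the truncations `S₁, S₂` at level `N` satisfy `q ^ N ∣ S₁ + S₂ + 1`
and `0 < S₁ + S₂ + 1 < 2 q ^ N`, so `S₁ + S₂ + 1 = q ^ N` for every `N`. Applied to the pairs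
`(z - 1, -z)` and `(-1, 0)` this gives `digits (z - 1) + digits (-z) = digits (-1)`, so the
partial products defining `Γ z * Γ (1 - z)` are exactly those defining `Γ 0`.
-/

open Filter Finset

theorem isClosed_setOf_dvd {R : Type*} [Monoid R] [TopologicalSpace R] [ContinuousMul R]
    [CompactSpace R] [T2Space R] (c : R) : IsClosed {x | c ∣ x} := by
  have : {x | c ∣ x} = Set.range (c * ·) := by
    ext x
    simp [Dvd.dvd, eq_comm]
  rw [this]
  exact (isCompact_range (continuous_const.mul continuous_id)).isClosed

theorem pow_dvd_sub_sum_range_of_hasSum {R : Type*} [CommRing R] [TopologicalSpace R]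
    [IsTopologicalRing R] [CompactSpace R] [T2Space R] {f : ℕ → R} {c w : R}
    (h : HasSum (fun i => f i * c ^ i) w) (N : ℕ) :
    c ^ N ∣ w - ∑ i ∈ range N, f i * c ^ i := by
  refine (isClosed_setOf_dvd _).mem_of_tendsto (h.tendsto_sum_nat.sub_const _) ?_
  filter_upwards [eventually_ge_atTop N] with M hM
  rw [← sum_Ico_eq_sub _ hM]
  exact dvd_sum fun i hi => dvd_mul_of_dvd_right (pow_dvd_pow c (mem_Ico.mp hi).1) _

theorem Nat.sum_range_mul_pow_lt {q : ℕ} {d : ℕ → ℕ} (hd : ∀ i, d i < q) (N : ℕ) :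
    ∑ i ∈ range N, d i * q ^ i < q ^ N := by
  induction N with
  | zero => simp
  | succ N ih =>
    rw [sum_range_succ, pow_succ']
    nlinarith [Nat.mul_le_mul_right (q ^ N) (hd N)]

namespace PadicInt

variable {p : ℕ} [Fact p.Prime]

theorem pow_dvd_natCast_iff {k m : ℕ} : (p : ℤ_[p]) ^ k ∣ (m : ℤ_[p]) ↔ p ^ k ∣ m := by
  rw [← Ideal.mem_span_singleton, ← norm_le_pow_iff_mem_span_pow, ← Int.cast_natCast,
    norm_int_le_pow_iff_dvd]
  exact_mod_cast Iff.rfl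

theorem sum_range_digits_add_add_one_eq_pow {q e : ℕ} (hq : q = p ^ e) {d₁ d₂ : ℕ → ℕ}
    {w₁ w₂ : ℤ_[p]} (hd₁ : ∀ i, d₁ i < q) (hd₂ : ∀ i, d₂ i < q)
    (hw₁ : HasSum (fun i => (d₁ i : ℤ_[p]) * (q : ℤ_[p]) ^ i) w₁)
    (hw₂ : HasSum (fun i => (d₂ i : ℤ_[p]) * (q : ℤ_[p]) ^ i) w₂) (hw : w₁ + w₂ = -1)
    (N : ℕ) :
    ∑ i ∈ range N, d₁ i * q ^ i + ∑ i ∈ range N, d₂ i * q ^ i + 1 = q ^ N := by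
  set m := ∑ i ∈ range N, d₁ i * q ^ i + ∑ i ∈ range N, d₂ i * q ^ i + 1 with hm
  have hdvd : (q : ℤ_[p]) ^ N ∣ (m : ℤ_[p]) := by
    have h := dvd_add (pow_dvd_sub_sum_range_of_hasSum hw₁ N)
      (pow_dvd_sub_sum_range_of_hasSum hw₂ N)
    rw [← dvd_neg]
    convert h using 1
    simp only [m]
    push_cast
    linear_combination -hw
  have hdvd' : q ^ N ∣ m := by
    rw [hq] at hdvd ⊢
    push_cast at hdvd
    rw [← pow_mul] at hdvd ⊢
    exact pow_dvd_natCast_iff.mp hdvd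
  refine Nat.eq_of_dvd_of_lt_two_mul (by omega) hdvd' ?_
  have := Nat.sum_range_mul_pow_lt hd₁ N
  have := Nat.sum_range_mul_pow_lt hd₂ N
  omega

theorem digits_add_add_one_eq_of_add_eq_neg_one {q e : ℕ} (hq : q = p ^ e) {d₁ d₂ : ℕ → ℕ}
    {w₁ w₂ : ℤ_[p]} (hd₁ : ∀ i, d₁ i < q) (hd₂ : ∀ i, d₂ i < q)
    (hw₁ : HasSum (fun i => (d₁ i : ℤ_[p]) * (q : ℤ_[p]) ^ i) w₁)
    (hw₂ : HasSum (fun i => (d₂ i : ℤ_[p]) * (q : ℤ_[p]) ^ i) w₂) (hw : w₁ + w₂ = -1)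
    (i : ℕ) : d₁ i + d₂ i + 1 = q := by
  have hi := sum_range_digits_add_add_one_eq_pow hq hd₁ hd₂ hw₁ hw₂ hw i
  have hi' := sum_range_digits_add_add_one_eq_pow hq hd₁ hd₂ hw₁ hw₂ hw (i + 1)
  rw [sum_range_succ, sum_range_succ] at hi'
  refine Nat.eq_of_mul_eq_mul_right (pow_pos (Nat.zero_lt_of_lt (hd₁ 0)) i) ?_
  rw [← pow_succ']
  linarith

end PadicInt

theorem gamma_v_reflection_general (p : ℕ) [Fact p.Prime] (q e : ℕ) (hq : q = p ^ e)
    (K : Type*) [Field K] [TopologicalSpace K] [IsTopologicalRing K] [T2Space K]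
    (a : ℕ → K)
    (digit : ℤ_[p] → ℕ → ℕ)
    (hdigLt : ∀ z i, digit z i < q)
    (hdigSum : ∀ z : ℤ_[p], HasSum (fun i => (digit z i : ℤ_[p]) * (q : ℤ_[p]) ^ i) z)
    (Γ : ℤ_[p] → K)
    (hΓ : ∀ z : ℤ_[p],
      Tendsto (fun N => ∏ i ∈ Finset.range N, a i ^ digit z i) atTop (nhds (Γ (z + 1))))
    (z : ℤ_[p]) :
    Γ z * Γ (1 - z) = Γ 0 := by
  have hdig : ∀ i, digit (z - 1) i + digit (-z) i = digit (-1) i := fun i => by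
    have h₁ := PadicInt.digits_add_add_one_eq_of_add_eq_neg_one hq (hdigLt _) (hdigLt _)
      (hdigSum (z - 1)) (hdigSum (-z)) (by ring) i
    -- `-1 = -1 + 0`, with `0` expanded by the zero digit sequence
    have h₂ := PadicInt.digits_add_add_one_eq_of_add_eq_neg_one hq (hdigLt _)
      (fun _ => Nat.zero_lt_of_lt (hdigLt 0 0)) (hdigSum (-1)) (by simp [hasSum_zero])
      (add_zero _) i
    omega
  have h₁ := hΓ (z - 1)
  have h₂ := hΓ (-z)
  have h₃ := hΓ (-1)
  rw [sub_add_cancel] at h₁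
  rw [neg_add_eq_sub] at h₂
  rw [neg_add_cancel] at h₃
  refine tendsto_nhds_unique ((h₁.mul h₂).congr fun N => ?_) h₃
  rw [← prod_mul_distrib]
  exact prod_congr rfl fun i _ => by rw [← pow_add, hdig]

/-- Reflection formula for the `v`-adic arithmetic gamma function.  Here `K` plays the
role of `k_v`, `a i` the role of `−D_{i,v}`, `digit z i` is the `i`-th base-`q` digit of
`z ∈ ℤ_p` (where `q = p^e`), and `Γ` is the `v`-adic arithmetic gamma function, defined
by `Γ(z+1) = ∏_{i≥0} (−D_{i,v})^{z_i}` as a convergent product.  Then for all `z ∈ ℤ_p`,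
`Γ(z) · Γ(1 − z) = Γ(0)`. -/
theorem gamma_v_reflection (p : ℕ) [Fact p.Prime] (q e : ℕ) (hq : q = p ^ e) (he : 0 < e)
    (K : Type*) [Field K] [TopologicalSpace K] [IsTopologicalRing K] [T2Space K]
    (a : ℕ → K)
    (digit : ℤ_[p] → ℕ → ℕ)
    (hdigLt : ∀ z i, digit z i < q)
    (hdigSum : ∀ z : ℤ_[p], HasSum (fun i => (digit z i : ℤ_[p]) * (q : ℤ_[p]) ^ i) z)
    (Γ : ℤ_[p] → K)
    (hΓ : ∀ z : ℤ_[p],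
      Tendsto (fun N => ∏ i ∈ Finset.range N, a i ^ digit z i) atTop (nhds (Γ (z + 1))))
    (z : ℤ_[p]) :
    Γ z * Γ (1 - z) = Γ 0 :=
  gamma_v_reflection_general p q e hq K a digit hdigLt hdigSum Γ hΓ z
end

section
/- Let d, ℓ0 be positive integers, and consider the vectors δ_0, …, δ_{d-1} and λ_0, …, λ_{ℓ-1} in ℚ^{dℓ0}, where ℓ divides dℓ0 and δ_{j,s} = 1 iff s ≡ j (mod d), λ_{j,s} = 1 iff s ≡ j (mod ℓ) (and 0 otherwise). Then the dimension of the ℚ-span of {δ_0,…,δ_{d-1}, λ_0,…,λ_{ℓ-1}} equals ℓ + d − gcd(d, ℓ). -/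
/-- Vectors constant on residue classes mod `m`. -/
def constMod (N m : ℕ) : Submodule ℚ (Fin N → ℚ) where
  carrier := {v | ∀ s t : Fin N, (s : ℕ) % m = (t : ℕ) % m → v s = v t}
  add_mem' := by
    intro a b ha hb s t h
    simp only [Pi.add_apply, ha s t h, hb s t h]
  zero_mem' := by intro s t h; rfl
  smul_mem' := by
    intro c v hv s t h
    simp only [Pi.smul_apply, hv s t h]

lemma span_indicator_eq_constMod (N m : ℕ) (hm : 0 < m) (hN : 0 < N) (hdvd : m ∣ N)
    (e : Fin m → Fin N → ℚ) (he : ∀ j s, e j s = if (s : ℕ) % m = (j : ℕ) then 1 else 0) :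
    Submodule.span ℚ (Set.range e) = constMod N m := by
  have hmN : m ≤ N := Nat.le_of_dvd hN hdvd
  apply le_antisymm
  · rw [Submodule.span_le]
    rintro _ ⟨j, rfl⟩ s t h
    rw [he, he, h]
  · intro v hv
    have hrep : v = ∑ j : Fin m, v ⟨(j : ℕ), lt_of_lt_of_le j.2 hmN⟩ • e j := by
      funext s
      rw [Finset.sum_apply]
      have hs : (s : ℕ) % m < m := Nat.mod_lt _ hm
      rw [Finset.sum_eq_single (⟨(s : ℕ) % m, hs⟩ : Fin m)]
      · have h1 : e ⟨(s : ℕ) % m, hs⟩ s = 1 := by rw [he]; simp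
        rw [Pi.smul_apply, h1, smul_eq_mul, mul_one]
        exact hv s ⟨(s : ℕ) % m, lt_of_lt_of_le hs hmN⟩ (by simp [Nat.mod_mod_of_dvd])
      · intro j _ hj
        have h0 : e j s = 0 := by
          rw [he]
          simp only [ite_eq_right_iff]
          intro hc
          exact absurd (Fin.ext hc.symm) hj
        rw [Pi.smul_apply, h0, smul_zero]
      · intro h; exact absurd (Finset.mem_univ _) h
    rw [hrep]
    exact Submodule.sum_mem _ fun j _ =>
      Submodule.smul_mem _ _ (Submodule.subset_span ⟨j, rfl⟩)

lemma finrank_span_indicator (N m : ℕ) (hm : 0 < m) (hN : 0 < N) (hdvd : m ∣ N)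
    (e : Fin m → Fin N → ℚ) (he : ∀ j s, e j s = if (s : ℕ) % m = (j : ℕ) then 1 else 0) :
    Module.finrank ℚ ↥(Submodule.span ℚ (Set.range e)) = m := by
  have hmN : m ≤ N := Nat.le_of_dvd hN hdvd
  have hli : LinearIndependent ℚ e := by
    rw [Fintype.linearIndependent_iff]
    intro c hc j
    have h := congrFun hc ⟨(j : ℕ), lt_of_lt_of_le j.2 hmN⟩
    rw [Finset.sum_apply] at h
    rw [Finset.sum_eq_single j] at h
    · have h1 : e j ⟨(j : ℕ), lt_of_lt_of_le j.2 hmN⟩ = 1 := by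
        rw [he]; simp [Nat.mod_eq_of_lt j.2]
      rw [Pi.smul_apply, h1, smul_eq_mul, mul_one] at h
      exact h
    · intro i _ hij
      have h0 : e i ⟨(j : ℕ), lt_of_lt_of_le j.2 hmN⟩ = 0 := by
        rw [he]
        simp only [Nat.mod_eq_of_lt j.2, ite_eq_right_iff]
        intro hc'
        exact absurd (Fin.ext hc'.symm) hij
      rw [Pi.smul_apply, h0, smul_zero]
    · intro h; exact absurd (Finset.mem_univ _) h
  rw [finrank_span_eq_card hli, Fintype.card_fin]

lemma exists_bezout (d ℓ : ℕ) (hd : 0 < d) (hl : 0 < ℓ) :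
    ∃ x y : ℕ, Nat.gcd d ℓ + x * ℓ = y * d := by
  have hkey : (Nat.gcd d ℓ : ℤ) = d * Nat.gcdA d ℓ + ℓ * Nat.gcdB d ℓ := Nat.gcd_eq_gcd_ab d ℓ
  set u := Nat.gcdA d ℓ with hu
  set v := Nat.gcdB d ℓ with hv
  obtain ⟨m, hmu, hmv⟩ : ∃ m : ℕ, -u ≤ (m : ℤ) ∧ v ≤ (m : ℤ) := by
    refine ⟨u.natAbs + v.natAbs, ?_, ?_⟩
    · push_cast
      have h1 : -u ≤ |u| := neg_le_abs u
      have h2 : (0 : ℤ) ≤ |v| := abs_nonneg v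
      linarith
    · push_cast
      have h1 : v ≤ |v| := le_abs_self v
      have h2 : (0 : ℤ) ≤ |u| := abs_nonneg u
      linarith
  have hd1 : (1 : ℤ) ≤ (d : ℤ) := by exact_mod_cast hd
  have hl1 : (1 : ℤ) ≤ (ℓ : ℤ) := by exact_mod_cast hl
  have h1 : (0 : ℤ) ≤ (m : ℤ) * d - v := by nlinarith [Int.natCast_nonneg m]
  have h2 : (0 : ℤ) ≤ u + (m : ℤ) * ℓ := by nlinarith [Int.natCast_nonneg m]
  refine ⟨((m : ℤ) * d - v).toNat, (u + (m : ℤ) * ℓ).toNat, ?_⟩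
  have key : ((Nat.gcd d ℓ + ((m : ℤ) * d - v).toNat * ℓ : ℕ) : ℤ)
      = (((u + (m : ℤ) * ℓ).toNat * d : ℕ) : ℤ) := by
    push_cast [Int.toNat_of_nonneg h1, Int.toNat_of_nonneg h2]
    linear_combination hkey
  exact_mod_cast key

lemma constMod_inf (N d ℓ : ℕ) (hd : 0 < d) (hl : 0 < ℓ) (hN : 0 < N)
    (hdN : d ∣ N) (hlN : ℓ ∣ N) :
    constMod N d ⊓ constMod N ℓ = constMod N (Nat.gcd d ℓ) := by
  have hgd : Nat.gcd d ℓ ∣ d := Nat.gcd_dvd_left _ _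
  have hgl : Nat.gcd d ℓ ∣ ℓ := Nat.gcd_dvd_right _ _
  have hgN : Nat.gcd d ℓ ∣ N := hgd.trans hdN
  have hg : 0 < Nat.gcd d ℓ := Nat.gcd_pos_of_pos_left _ hd
  set g := Nat.gcd d ℓ with hgdef
  apply le_antisymm
  · rintro v ⟨hvd, hvl⟩
    intro s t hst
    obtain ⟨x, y, hxy⟩ := exists_bezout d ℓ hd hl
    have step : ∀ a : ℕ, ∀ ha : a < N,
        v ⟨a, ha⟩ = v ⟨(a + g) % N, Nat.mod_lt _ hN⟩ := by
      intro a ha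
      have e1 : v ⟨a, ha⟩ = v ⟨(a + y * d) % N, Nat.mod_lt _ hN⟩ := by
        apply hvd
        show a % d = (a + y * d) % N % d
        rw [Nat.mod_mod_of_dvd _ hdN, Nat.add_mul_mod_self_right]
      have e2 : v ⟨(a + g) % N, Nat.mod_lt _ hN⟩
          = v ⟨((a + g) + x * ℓ) % N, Nat.mod_lt _ hN⟩ := by
        apply hvl
        show (a + g) % N % ℓ = ((a + g) + x * ℓ) % N % ℓ
        rw [Nat.mod_mod_of_dvd _ hlN, Nat.mod_mod_of_dvd _ hlN, Nat.add_mul_mod_self_right]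
      have harith : a + g + x * ℓ = a + y * d := by rw [add_assoc, hgdef, ← hxy]
      rw [e1, e2, harith]
    have iter : ∀ k : ℕ, ∀ a : ℕ, ∀ ha : a < N,
        v ⟨a, ha⟩ = v ⟨(a + k * g) % N, Nat.mod_lt _ hN⟩ := by
      intro k
      induction k with
      | zero => intro a ha; simp [Nat.mod_eq_of_lt ha]
      | succ k ih =>
        intro a ha
        rw [ih a ha, step ((a + k * g) % N) (Nat.mod_lt _ hN)]
        congr 1
        apply Fin.ext
        show ((a + k * g) % N + g) % N = (a + (k + 1) * g) % N
        rw [Nat.mod_add_mod]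
        congr 1
        ring
    have hdvd2 : g ∣ (t : ℕ) + N - s := by
      have hs' : g ∣ (s : ℕ) - (s : ℕ) % g := Nat.dvd_sub_mod _
      have ht' : g ∣ (t : ℕ) - (t : ℕ) % g := Nat.dvd_sub_mod _
      have hms : (s : ℕ) % g ≤ (s : ℕ) := Nat.mod_le _ _
      have hmt : (t : ℕ) % g ≤ (t : ℕ) := Nat.mod_le _ _
      have heq : (t : ℕ) + N - s = (((t : ℕ) - (t : ℕ) % g) + N) - ((s : ℕ) - (s : ℕ) % g) := by
        omega
      rw [heq]
      exact Nat.dvd_sub (Nat.dvd_add ht' hgN) hs'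
    obtain ⟨k, hk⟩ := hdvd2
    have hk' : k * g = (t : ℕ) + N - (s : ℕ) := by rw [mul_comm]; exact hk.symm
    have hsle : (s : ℕ) ≤ (t : ℕ) + N := by have := s.2; omega
    have hidx : ((s : ℕ) + k * g) % N = (t : ℕ) := by
      have heq2 : (s : ℕ) + k * g = (t : ℕ) + N := by omega
      rw [heq2, Nat.add_mod_right, Nat.mod_eq_of_lt t.2]
    have hfin := iter k (s : ℕ) s.2
    have h1 : (⟨(s : ℕ), s.2⟩ : Fin N) = s := rfl
    have h2 : (⟨((s : ℕ) + k * g) % N, Nat.mod_lt _ hN⟩ : Fin N) = t := Fin.ext hidx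
    rw [h1, h2] at hfin
    exact hfin
  · intro v hv
    refine ⟨?_, ?_⟩
    · intro s t h
      apply hv
      rw [← Nat.mod_mod_of_dvd (s : ℕ) hgd, ← Nat.mod_mod_of_dvd (t : ℕ) hgd, h]
    · intro s t h
      apply hv
      rw [← Nat.mod_mod_of_dvd (s : ℕ) hgl, ← Nat.mod_mod_of_dvd (t : ℕ) hgl, h]

/-- Let `d, ℓ0` be positive integers and `ℓ` a positive divisor of `d·ℓ0` (e.g.
`d·ℓ0 = lcm(d, ℓ)`).  Consider the vectors `δ_0, …, δ_{d-1}` and `λ_0, …, λ_{ℓ-1}` in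
`ℚ^{dℓ0}` with `δ_{j,s} = 1` iff `s ≡ j (mod d)` and `λ_{j,s} = 1` iff `s ≡ j (mod ℓ)`
(and `0` otherwise).  Then the dimension of the `ℚ`-span of
`{δ_0, …, δ_{d-1}, λ_0, …, λ_{ℓ-1}}` equals `ℓ + d − gcd(d, ℓ)`. -/
theorem span_delta_lambda_finrank (d ℓ0 ℓ : ℕ) (hd : 0 < d) (hℓ0 : 0 < ℓ0) (hℓ : 0 < ℓ)
    (hdvd : ℓ ∣ d * ℓ0)
    (δ : Fin d → (Fin (d * ℓ0) → ℚ)) (lam : Fin ℓ → (Fin (d * ℓ0) → ℚ))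
    (hδ : ∀ j s, δ j s = if (s : ℕ) % d = (j : ℕ) then 1 else 0)
    (hlam : ∀ j s, lam j s = if (s : ℕ) % ℓ = (j : ℕ) then 1 else 0) :
    Module.finrank ℚ ↥(Submodule.span ℚ (Set.range δ ∪ Set.range lam)) =
      ℓ + d - Nat.gcd d ℓ := by
  have hNpos : 0 < d * ℓ0 := Nat.mul_pos hd hℓ0
  have hdN : d ∣ d * ℓ0 := Dvd.intro ℓ0 rfl
  have hgpos : 0 < Nat.gcd d ℓ := Nat.gcd_pos_of_pos_left _ hd
  have hgN : Nat.gcd d ℓ ∣ d * ℓ0 := (Nat.gcd_dvd_left d ℓ).trans hdN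
  set mu : Fin (Nat.gcd d ℓ) → Fin (d * ℓ0) → ℚ :=
    fun j s => if (s : ℕ) % Nat.gcd d ℓ = (j : ℕ) then 1 else 0 with hmu
  have hmuspec : ∀ j s, mu j s = if (s : ℕ) % Nat.gcd d ℓ = (j : ℕ) then 1 else 0 :=
    fun _ _ => rfl
  have hspand : Submodule.span ℚ (Set.range δ) = constMod (d * ℓ0) d :=
    span_indicator_eq_constMod _ d hd hNpos hdN δ hδ
  have hspanl : Submodule.span ℚ (Set.range lam) = constMod (d * ℓ0) ℓ :=
    span_indicator_eq_constMod _ ℓ hℓ hNpos hdvd lam hlam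
  have hspanm : Submodule.span ℚ (Set.range mu) = constMod (d * ℓ0) (Nat.gcd d ℓ) :=
    span_indicator_eq_constMod _ _ hgpos hNpos hgN mu hmuspec
  have hinf : Submodule.span ℚ (Set.range δ) ⊓ Submodule.span ℚ (Set.range lam)
      = Submodule.span ℚ (Set.range mu) := by
    rw [hspand, hspanl, hspanm]
    exact constMod_inf _ d ℓ hd hℓ hNpos hdN hdvd
  have hrd : Module.finrank ℚ ↥(Submodule.span ℚ (Set.range δ)) = d :=
    finrank_span_indicator _ d hd hNpos hdN δ hδ
  have hrl : Module.finrank ℚ ↥(Submodule.span ℚ (Set.range lam)) = ℓ :=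
    finrank_span_indicator _ ℓ hℓ hNpos hdvd lam hlam
  have hrg : Module.finrank ℚ ↥(Submodule.span ℚ (Set.range mu)) = Nat.gcd d ℓ :=
    finrank_span_indicator _ _ hgpos hNpos hgN mu hmuspec
  have hkey := Submodule.finrank_sup_add_finrank_inf_eq
    (Submodule.span ℚ (Set.range δ)) (Submodule.span ℚ (Set.range lam))
  rw [hinf, hrd, hrl, hrg] at hkey
  rw [Submodule.span_union]
  have hgle : Nat.gcd d ℓ ≤ d := Nat.le_of_dvd hd (Nat.gcd_dvd_left d ℓ)
  omega
end

section
/- Let d ≥ 1, b ≥ 2 with q^d ≢ 1 (mod b) and gcd(b, q) = 1, let ℓ0 be the multiplicative order of q^d mod b, and let a' ∈ ℤ with 0 ≤ a' < b, gcd(a', b) = 1. Write a'/b = Σ_{i=0}^{dℓ0−1} a_i q^i/(q^{dℓ0} − 1) with 0 ≤ a_i < q, and set a⃗ = (a_0, …, a_{dℓ0−1}). Then a⃗ does not lie in the ℚ-span of the vectors δ_0, …, δ_{d-1}, where δ_{j,s} = 1 if s ≡ j mod d and 0 otherwise. -/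
/-- Let `d ≥ 1`, `b ≥ 2` with `q^d ≢ 1 (mod b)` and `gcd(b, q) = 1`, let `ℓ0` be the
multiplicative order of `q^d` mod `b`, and let `a'` with `0 ≤ a' < b`, `gcd(a', b) = 1`.
Write `a'/b = Σ_{i=0}^{dℓ0−1} a_i q^i/(q^{dℓ0} − 1)` with `0 ≤ a_i < q`, and let
`a⃗ = (a_0, …, a_{dℓ0−1})`.  Then `a⃗` does not lie in the `ℚ`-span of the vectors
`δ_0, …, δ_{d-1}`, where `δ_{j,s} = 1` if `s ≡ j (mod d)` and `0` otherwise. -/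
theorem digits_not_in_span_delta (q d b : ℕ) (hd : 0 < d) (hb : 2 ≤ b)
    (hgcd : Nat.gcd b q = 1) (hnot : ¬ (q ^ d ≡ 1 [MOD b]))
    (ℓ0 : ℕ) (hℓ0 : ℓ0 = orderOf ((q : ZMod b) ^ d))
    (a' : ℕ) (ha' : a' < b) (hcop : Nat.gcd a' b = 1)
    (a : Fin (d * ℓ0) → ℕ) (haq : ∀ i, a i < q)
    (hsum : a' * (q ^ (d * ℓ0) - 1) = b * ∑ i : Fin (d * ℓ0), a i * q ^ (i : ℕ))
    (δ : Fin d → (Fin (d * ℓ0) → ℚ))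
    (hδ : ∀ j s, δ j s = if (s : ℕ) % d = (j : ℕ) then 1 else 0) :
    (fun s => (a s : ℚ)) ∉ Submodule.span ℚ (Set.range δ) := by
  intro hmem
  -- q ≥ 2
  have hq0 : q ≠ 0 := by rintro rfl; simp [Nat.gcd_zero_right] at hgcd; omega
  have hq1 : q ≠ 1 := by rintro rfl; exact hnot (by simp [Nat.ModEq])
  have hq2 : 2 ≤ q := by omega
  -- ℓ0 > 0
  haveI : NeZero b := ⟨by omega⟩
  have hℓ0pos : 0 < ℓ0 := by
    have hco : Nat.Coprime q b := Nat.coprime_comm.mp hgcd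
    have hval : (((ZMod.unitOfCoprime q hco) ^ d : (ZMod b)ˣ) : ZMod b)
        = (q : ZMod b) ^ d := by
      simp [Units.val_pow_eq_pow_val, ZMod.coe_unitOfCoprime]
    rw [hℓ0, ← hval, orderOf_units]
    exact orderOf_pos _
  have hdN : d ≤ d * ℓ0 := Nat.le_mul_of_pos_right d hℓ0pos
  -- extract coefficients
  rw [Submodule.mem_span_range_iff_exists_fun ℚ] at hmem
  obtain ⟨c, hc⟩ := hmem
  have hval : ∀ s : Fin (d * ℓ0), (a s : ℚ) = c ⟨(s : ℕ) % d, Nat.mod_lt _ hd⟩ := by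
    intro s
    have h1 := congrFun hc s
    simp only [Finset.sum_apply, Pi.smul_apply, hδ, smul_eq_mul, mul_ite, mul_one,
      mul_zero] at h1
    rw [← h1]
    rw [Finset.sum_eq_single (⟨(s : ℕ) % d, Nat.mod_lt _ hd⟩ : Fin d)]
    · simp
    · intro j _ hj
      rw [if_neg]
      intro h; exact hj (Fin.ext h.symm)
    · intro h; exact absurd (Finset.mem_univ _) h
  -- periodicity of the digits
  have hper : ∀ i : Fin (d * ℓ0),
      a i = a ⟨(i : ℕ) % d, lt_of_lt_of_le (Nat.mod_lt _ hd) hdN⟩ := by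
    intro i
    have h1 := hval i
    have h2 := hval ⟨(i : ℕ) % d, lt_of_lt_of_le (Nat.mod_lt _ hd) hdN⟩
    have h3 : ((i : ℕ) % d) % d = (i : ℕ) % d := Nat.mod_mod_of_dvd _ dvd_rfl
    have h4 : (a i : ℚ) = (a ⟨(i : ℕ) % d, lt_of_lt_of_le (Nat.mod_lt _ hd) hdN⟩ : ℚ) := by
      rw [h1, h2]
      congr 1
      exact Fin.ext h3.symm
    exact_mod_cast h4
  -- integer digits, fully periodic
  set A : ℕ → ℤ := fun i =>
    ((a ⟨i % d, lt_of_lt_of_le (Nat.mod_lt _ hd) hdN⟩ : ℕ) : ℤ) with hA_def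
  have hA : ∀ i : Fin (d * ℓ0), ((a i : ℕ) : ℤ) = A (i : ℕ) := by
    intro i
    rw [hA_def]
    exact_mod_cast congrArg _ (hper i)
  have hAper : ∀ n j : ℕ, A (d * n + j) = A j := by
    intro n j
    rw [hA_def]
    simp only []
    congr 2
    simp [Nat.mul_add_mod]
  -- geometric decomposition of the digit sum
  have hgeom : ∀ ℓ : ℕ, (∑ i ∈ Finset.range (d * ℓ), A i * (q : ℤ) ^ i)
      = (∑ j ∈ Finset.range d, A j * (q : ℤ) ^ j)
        * ∑ t ∈ Finset.range ℓ, ((q : ℤ) ^ d) ^ t := by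
    intro ℓ
    induction ℓ with
    | zero => simp
    | succ n ih =>
      rw [Nat.mul_succ, Finset.sum_range_add, ih, Finset.sum_range_succ]
      have h2 : (∑ j ∈ Finset.range d, A (d * n + j) * (q : ℤ) ^ (d * n + j))
          = (∑ j ∈ Finset.range d, A j * (q : ℤ) ^ j) * ((q : ℤ) ^ d) ^ n := by
        rw [Finset.sum_mul]
        refine Finset.sum_congr rfl fun j hj => ?_
        rw [hAper, pow_add, ← pow_mul]
        ring
      rw [h2]; ring
  set S : ℤ := ∑ j ∈ Finset.range d, A j * (q : ℤ) ^ j with hS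
  set T : ℤ := ∑ t ∈ Finset.range ℓ0, ((q : ℤ) ^ d) ^ t with hT
  -- cast hsum to ℤ
  have hqpow : 1 ≤ q ^ (d * ℓ0) := Nat.one_le_pow _ _ (by omega)
  have hZ : (a' : ℤ) * ((q : ℤ) ^ (d * ℓ0) - 1)
      = (b : ℤ) * ∑ i : Fin (d * ℓ0), ((a i : ℕ) : ℤ) * (q : ℤ) ^ (i : ℕ) := by
    have h := congrArg (Nat.cast : ℕ → ℤ) hsum
    push_cast [Nat.cast_sub hqpow] at h
    exact_mod_cast h
  have hZ' : (a' : ℤ) * ((q : ℤ) ^ (d * ℓ0) - 1) = (b : ℤ) * (S * T) := by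
    rw [hZ]
    congr 1
    rw [Finset.sum_congr rfl (fun i _ => by rw [hA i])]
    rw [Fin.sum_univ_eq_sum_range (fun i => A i * (q : ℤ) ^ i)]
    exact hgeom ℓ0
  -- factor the geometric sum
  have hfac : (q : ℤ) ^ (d * ℓ0) - 1 = T * ((q : ℤ) ^ d - 1) := by
    rw [hT, geom_sum_mul, ← pow_mul]
  have hqZ : (0 : ℤ) < (q : ℤ) := by exact_mod_cast (by omega : 0 < q)
  have hTpos : 0 < T := by
    rw [hT]
    exact Finset.sum_pos (fun t _ => pow_pos (pow_pos hqZ d) t)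
      (Finset.nonempty_range_iff.mpr (by omega))
  have hkey : (a' : ℤ) * ((q : ℤ) ^ d - 1) = (b : ℤ) * S := by
    have h1 : ((a' : ℤ) * ((q : ℤ) ^ d - 1)) * T = ((b : ℤ) * S) * T := by
      calc ((a' : ℤ) * ((q : ℤ) ^ d - 1)) * T
          = (a' : ℤ) * ((q : ℤ) ^ (d * ℓ0) - 1) := by rw [hfac]; ring
        _ = (b : ℤ) * (S * T) := hZ'
        _ = ((b : ℤ) * S) * T := by ring
    exact mul_right_cancel₀ (ne_of_gt hTpos) h1
  -- coprimality and divisibility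
  have hco : IsCoprime (b : ℤ) (a' : ℤ) :=
    Nat.isCoprime_iff_coprime.mpr (Nat.coprime_comm.mp hcop)
  have hdvd1 : (b : ℤ) ∣ (a' : ℤ) * ((q : ℤ) ^ d - 1) := ⟨S, hkey⟩
  have hdvd : (b : ℤ) ∣ (q : ℤ) ^ d - 1 := hco.dvd_of_dvd_mul_left hdvd1
  have h1 : 1 ≤ q ^ d := Nat.one_le_pow _ _ (by omega)
  have h2 : (b : ℤ) ∣ ((q ^ d - 1 : ℕ) : ℤ) := by
    rwa [Nat.cast_sub h1, Nat.cast_pow, Nat.cast_one]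
  exact hnot ((Nat.modEq_iff_dvd' h1).mpr (Int.natCast_dvd_natCast.mp h2)).symm
end

section
/- Let R = 𝔽_{q^{dℓ}}[t̃_v] be a polynomial ring and S = ∏_{i=1}^{d-1}(1 − (ε^{q^i} − ε) t̃_v) ∈ R, where ε generates 𝔽_{q^d} over 𝔽_q. Set T̃_v := t̃_v^d / S in the fraction field. Then R[1/S] = 𝔽_{q^{dℓ}}[T̃_v][t̃_v], this ring is a principal ideal domain, and it equals the integral closure of 𝔽_q[T̃_v] in 𝔽_{q^{dℓ}}(t̃_v). Moreover, the prime (T̃_v) of 𝔽_q[T̃_v] is totally ramified in this ring, with the unique prime above it being the principal ideal (t̃_v). -/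
/-!
Write `S = 1 - X * W`. Then `S` divides `1 - (X * W) ^ d`, and dividing by `S` gives
`1 / S = U + W ^ d * T̃` for a polynomial `U`; hence `E[t̃, T̃] = E[t̃][1 / S]`. This is a
localization of a PID, so it is a PID, integrally closed in its fraction field `E(t̃)`.
Since `deg S < d`, `t̃` is a root of the monic polynomial `Y ^ d - T̃ * S(Y)`, and `E` is
finite, so `E[t̃, T̃]` is integral over `F[T̃]`, hence equal to its integral closure.
Finally `T̃ = t̃ ^ d * S⁻¹` with `S` a unit, and `(t̃)` is a nonzero, hence maximal, prime.
-/

open Polynomial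

namespace Polynomial

variable {R ι : Type*} [CommRing R]

theorem coeff_zero_prod_one_sub_C_mul_X (s : Finset ι) (a : ι → R) :
    (∏ i ∈ s, (1 - C (a i) * X)).coeff 0 = 1 := by
  simp [coeff_zero_eq_eval_zero, eval_prod]

theorem natDegree_prod_one_sub_C_mul_X_le (s : Finset ι) (a : ι → R) :
    (∏ i ∈ s, (1 - C (a i) * X)).natDegree ≤ s.card := by
  refine (natDegree_prod_le _ _).trans
    ((Finset.sum_le_card_nsmul _ _ 1 fun i _ => ?_).trans (by simp))
  exact (natDegree_sub_le _ _).trans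
    (max_le (by simp) ((natDegree_C_mul_le _ _).trans natDegree_X_le))

theorem eval₂_algebraMap_comp_mem_adjoin {F K L : Type*} [CommSemiring F] [CommSemiring K]
    [CommSemiring L] [Algebra F K] [Algebra K L] (x : L) (p : F[X]) :
    p.eval₂ ((algebraMap K L).comp (algebraMap F K)) x ∈ Algebra.adjoin K {x} := by
  rw [← eval₂_map, ← aeval_def]
  exact aeval_mem_adjoin_singleton K x

end Polynomial

section AdjoinInverse

variable {K L : Type*} [CommRing K] [Field L] [Algebra K L]

theorem inv_aeval_mem_adjoin_pow_div {S : K[X]} (hS : S.coeff 0 = 1) (x : L) (d : ℕ) :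
    (aeval x S)⁻¹ ∈ Algebra.adjoin K {x, x ^ d / aeval x S} := by
  set s := aeval x S
  by_cases hs : s = 0
  · simp [hs]
  set W := -S.divX
  have hSW : S = 1 - X * W := by
    nth_rewrite 1 [← X_mul_divX_add S]
    rw [hS, map_one]
    ring
  obtain ⟨U, hU⟩ : S ∣ 1 - (X * W) ^ d := by
    rw [hSW]
    simpa using sub_dvd_pow_sub_pow (1 : K[X]) (X * W) d
  have hinv : s⁻¹ = aeval x U + aeval x W ^ d * (x ^ d / s) := by
    have := congrArg (aeval x) hU
    simp only [map_sub, map_one, map_pow, map_mul, aeval_X] at this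
    field_simp
    linear_combination this
  have mem : ∀ p : K[X], aeval x p ∈ Algebra.adjoin K {x, x ^ d / s} := fun p =>
    Algebra.adjoin_mono (by simp) (aeval_mem_adjoin_singleton K x)
  rw [hinv]
  exact add_mem (mem U) (mul_mem (pow_mem (mem W) d) (Algebra.subset_adjoin (by simp)))

theorem adjoin_pow_div_aeval_eq {S : K[X]} (hS : S.coeff 0 = 1) (x : L) (d : ℕ) :
    Algebra.adjoin K {x, x ^ d / aeval x S} = Algebra.adjoin K {x, (aeval x S)⁻¹} := by
  refine le_antisymm (Algebra.adjoin_le ?_) (Algebra.adjoin_le ?_)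
  · rintro y (rfl | rfl)
    · exact Algebra.subset_adjoin (by simp)
    · rw [div_eq_mul_inv]
      exact mul_mem (pow_mem (Algebra.subset_adjoin (by simp)) d) (Algebra.subset_adjoin (by simp))
  · rintro y (rfl | rfl)
    · exact Algebra.subset_adjoin (by simp)
    · exact inv_aeval_mem_adjoin_pow_div hS x d

end AdjoinInverse

theorem Algebra.adjoin_X_inv_eq_restrictScalars {K L : Type*} [CommRing K] [Field L]
    [Algebra K L] [Algebra K[X] L] [IsScalarTower K K[X] L] (S : K[X]) :
    Algebra.adjoin K {algebraMap K[X] L X, (algebraMap K[X] L S)⁻¹} =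
      (Algebra.adjoin K[X] {(algebraMap K[X] L S)⁻¹}).restrictScalars K := by
  rw [Algebra.adjoin_eq_adjoin_union K {X} _ Polynomial.adjoin_X, Set.image_singleton,
    Set.singleton_union]

section Localization

theorem Algebra.adjoin_inv_eq_ofField {R L : Type*} [CommRing R] [IsDomain R] [Field L]
    [Algebra R L] [IsFractionRing R L] {r : R} (hr : r ≠ 0) :
    Algebra.adjoin R {(algebraMap R L r)⁻¹} = Localization.subalgebra.ofField L
      (Submonoid.powers r) (powers_le_nonZeroDivisors_of_noZeroDivisors hr) := by
  refine le_antisymm (Algebra.adjoin_le ?_) ?_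
  · rintro _ rfl
    exact ⟨1, r, Submonoid.mem_powers r, by rw [map_one, one_mul]⟩
  · rintro x ⟨a, _, ⟨n, rfl⟩, rfl : x = _⟩
    have hinv : (algebraMap R L r)⁻¹ ∈ Algebra.adjoin R {(algebraMap R L r)⁻¹} :=
      Algebra.subset_adjoin (Set.mem_singleton _)
    dsimp only
    rw [map_pow, ← inv_pow, ← Algebra.smul_def]
    exact Subalgebra.smul_mem _ (pow_mem hinv n) a

variable {R S : Type*} [CommRing R] [CommRing S] [Algebra R S]

theorem IsLocalization.isPrincipalIdealRing (M : Submonoid R) [IsLocalization M S]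
    [IsPrincipalIdealRing R] : IsPrincipalIdealRing S := by
  refine ⟨fun I => ⟨⟨algebraMap R S (Submodule.IsPrincipal.generator (I.under R)), ?_⟩⟩⟩
  conv_lhs =>
    rw [← IsLocalization.map_under M S I, ← Ideal.span_singleton_generator (I.under R)]
  rw [Ideal.map_span, Set.image_singleton, Ideal.submodule_span_eq]

theorem IsLocalization.isPrime_span_algebraMap {r : R} [IsLocalization.Away r S] {p : R}
    (hp : Prime p) (hpr : ¬p ∣ r) : (Ideal.span {algebraMap R S p}).IsPrime := by
  have hP : (Ideal.span {p}).IsPrime := (Ideal.span_singleton_prime hp.ne_zero).mpr hp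
  have hdisj : Disjoint (Submonoid.powers r : Set R) (Ideal.span {p}) :=
    (Ideal.disjoint_powers_iff_notMem_of_isPrime r).mpr (by rwa [Ideal.mem_span_singleton])
  simpa [Ideal.map_span] using
    IsLocalization.isPrime_of_isPrime_disjoint (Submonoid.powers r) S _ hP hdisj

end Localization

section Ramification

variable {A : Type*} [CommRing A] [IsDomain A]

theorem Ideal.eq_span_singleton_of_pow_mem [IsPrincipalIdealRing A] {t : A}
    (ht : (Ideal.span {t}).IsPrime) (ht0 : t ≠ 0) {Q : Ideal A} (hQ : Q.IsPrime) {d : ℕ}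
    (hd : t ^ d ∈ Q) : Q = Ideal.span {t} := by
  have hmax : (Ideal.span {t}).IsMaximal :=
    IsPrime.to_maximal_ideal (by rwa [Ne, Ideal.span_singleton_eq_bot])
  exact (hmax.eq_of_le hQ.ne_top
    ((Ideal.span_singleton_le_iff_mem _).mpr (hQ.mem_of_pow_mem d hd))).symm

theorem Ideal.span_singleton_eq_span_singleton_pow {t T u : A} (hu : IsUnit u) {d : ℕ}
    (hT : T * u = t ^ d) : Ideal.span {T} = Ideal.span {t} ^ d := by
  rw [Ideal.span_singleton_pow, Ideal.span_singleton_eq_span_singleton]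
  exact ⟨hu.unit, hT⟩

theorem Subalgebra.totally_ramified_of_mul_eq_pow {R L : Type*} [CommRing R] [IsDomain R]
    [Field L] [Algebra R L] {B : Subalgebra R L} [IsPrincipalIdealRing B] {r p : R}
    [IsLocalization.Away r B] (hp : Prime p) (hpr : ¬p ∣ r) (tB TB : B)
    (htB : (tB : L) = algebraMap R L p) {d : ℕ} (hTB : (TB : L) * algebraMap R L r = tB ^ d) :
    (Ideal.span {tB}).IsPrime ∧
      (∀ Q : Ideal B, Q.IsPrime → TB ∈ Q → Q = Ideal.span {tB}) ∧
      Ideal.span {TB} = Ideal.span {tB} ^ d := by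
  obtain rfl : tB = algebraMap R B p := Subtype.ext htB
  have hTB' : TB * algebraMap R B r = algebraMap R B p ^ d := Subtype.ext hTB
  have hprime := IsLocalization.isPrime_span_algebraMap hp hpr (S := B)
  have hr : r ≠ 0 := by
    rintro rfl
    exact hpr (dvd_zero p)
  have hp0 : algebraMap R B p ≠ 0 := (map_ne_zero_iff _ (IsLocalization.injective B
    (powers_le_nonZeroDivisors_of_noZeroDivisors hr))).mpr hp.ne_zero
  refine ⟨hprime, fun Q hQ hTQ => ?_, ?_⟩
  · exact Ideal.eq_span_singleton_of_pow_mem hprime hp0 hQ (hTB' ▸ Q.mul_mem_right _ hTQ)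
  · exact Ideal.span_singleton_eq_span_singleton_pow (IsLocalization.Away.algebraMap_isUnit r) hTB'

end Ramification

section Integrality

variable {R L : Type*} [CommRing R] [CommRing L] [Algebra R L]

theorem isIntegral_of_pow_eq_self {x : L} {n : ℕ} (hn : 1 < n) (hx : x ^ n = x) :
    IsIntegral R x :=
  ⟨X ^ n - X, monic_X_pow_sub (degree_X_le.trans_lt (by exact_mod_cast hn)), by simp [hx]⟩

theorem isIntegral_of_pow_eq_mul_aeval [Nontrivial L] {K : Type*} [CommRing K] [Algebra K L]
    {S : K[X]} {d : ℕ} (hdeg : S.natDegree < d) (hK : ∀ k : K, IsIntegral R (algebraMap K L k))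
    {x y : L} (hy : IsIntegral R y) (hx : x ^ d = y * aeval x S) : IsIntegral R x := by
  set p : L[X] := X ^ d - C y * S.map (algebraMap K L)
  have hlow : (C y * S.map (algebraMap K L)).natDegree < d :=
    ((natDegree_C_mul_le _ _).trans natDegree_map_le).trans_lt hdeg
  refine .of_aeval_monic_of_isIntegral_coeff (p := p)
    (monic_X_pow_sub (degree_le_natDegree.trans_lt (by exact_mod_cast hlow))) ?_ ?_ fun i => ?_
  · rw [natDegree_sub_eq_left_of_natDegree_lt (by rwa [natDegree_X_pow]), natDegree_X_pow]
    exact ((Nat.zero_le _).trans_lt hdeg).ne'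
  · simpa [p, eval_map_algebraMap, hx] using isIntegral_zero
  · simp only [p, coeff_sub, coeff_X_pow, coeff_C_mul, coeff_map]
    exact .sub (by split_ifs <;> simp [isIntegral_one, isIntegral_zero]) (hy.mul (hK _))

theorem isIntegral_of_mem_adjoin {K : Type*} [CommRing K] [Algebra K L] {s : Set L}
    (hK : ∀ k : K, IsIntegral R (algebraMap K L k)) (hs : ∀ x ∈ s, IsIntegral R x) {x : L}
    (hx : x ∈ Algebra.adjoin K s) : IsIntegral R x := by
  induction hx using Algebra.adjoin_induction with
  | mem x hx => exact hs x hx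
  | algebraMap k => exact hK k
  | add x y _ _ hx hy => exact hx.add hy
  | mul x y _ _ hx hy => exact hx.mul hy

theorem isIntegral_of_mem_adjoin_pow_eq_mul_aeval [Nontrivial L] {K : Type*} [Field K]
    [Fintype K] [Algebra K L] {S : K[X]} {d : ℕ} (hdeg : S.natDegree < d) {t T : L}
    (hT : IsIntegral R T) (ht : t ^ d = T * aeval t S) {x : L}
    (hx : x ∈ Algebra.adjoin K {t, T}) : IsIntegral R x := by
  have hK : ∀ k : K, IsIntegral R (algebraMap K L k) := fun k =>
    isIntegral_of_pow_eq_self Fintype.one_lt_card (by rw [← map_pow, FiniteField.pow_card])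
  refine isIntegral_of_mem_adjoin hK ?_ hx
  rintro _ (rfl | rfl)
  · exact isIntegral_of_pow_eq_mul_aeval hdeg hK hT ht
  · exact hT

theorem Subalgebra.mem_iff_isIntegral {K : Type*} [CommRing K] [Algebra K L]
    (B : Subalgebra K L) [IsIntegrallyClosed B] [IsFractionRing B L]
    (hRB : ∀ r : R, algebraMap R L r ∈ B) (hBR : ∀ b ∈ B, IsIntegral R b) (x : L) :
    x ∈ B ↔ IsIntegral R x := by
  refine ⟨hBR x, fun ⟨p, hmonic, hp⟩ => ?_⟩
  let g : R →+* B := (algebraMap R L).codRestrict B hRB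
  have hBx : IsIntegral B x := ⟨p.map g, hmonic.map g, by rwa [eval₂_map]⟩
  obtain ⟨y, rfl⟩ := IsIntegrallyClosed.isIntegral_iff.mp hBx
  exact y.2

end Integrality

theorem restriction_of_scalars_ring_general (F E : Type*) [Field F] [Field E]
    [Fintype E] [Algebra F E]
    (q d : ℕ) (hd : 0 < d)
    (ε : E)
    (S : E[X]) (hS : S = ∏ i ∈ Finset.Ioo 0 d, (1 - C (ε ^ q ^ i - ε) * X))
    (t s T : RatFunc E)
    (ht : t = algebraMap E[X] (RatFunc E) X)
    (hs : s = algebraMap E[X] (RatFunc E) S)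
    (hT : T = t ^ d / s)
    (ψ : Polynomial F →+* RatFunc E)
    (hψ : ψ = Polynomial.eval₂RingHom
      (((algebraMap E (RatFunc E)).comp (algebraMap F E)) : F →+* RatFunc E) T)
    (A : Subalgebra E (RatFunc E)) (hA : A = Algebra.adjoin E {t, T}) :
    A = Algebra.adjoin E {t, s⁻¹} ∧
    IsPrincipalIdealRing A ∧
    (∀ x : RatFunc E, x ∈ A ↔ ψ.IsIntegralElem x) ∧
    (∀ tA TA : A, (tA : RatFunc E) = t → (TA : RatFunc E) = T →
      ((Ideal.span {tA}).IsPrime ∧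
        (∀ Q : Ideal A, Q.IsPrime → TA ∈ Q → Q = Ideal.span {tA}) ∧
        Ideal.span {TA} = Ideal.span {tA} ^ d)) := by
  have hS0 : S.coeff 0 = 1 := hS ▸ coeff_zero_prod_one_sub_C_mul_X _ _
  have hSdeg : S.natDegree < d :=
    hS ▸ (natDegree_prod_one_sub_C_mul_X_le _ _).trans_lt (by simp; omega)
  have hS_ne : S ≠ 0 := fun h => by simp [h] at hS0
  have hs_eq : s = aeval t S := by rw [hs, ht, aeval_algebraMap_apply, aeval_X_left_apply]
  have htds : t ^ d = T * s := by
    rw [hT, div_mul_cancel₀ _ (hs ▸ RatFunc.algebraMap_ne_zero hS_ne)]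
  set B := Localization.subalgebra.ofField (RatFunc E) (Submonoid.powers S)
    (powers_le_nonZeroDivisors_of_noZeroDivisors hS_ne) with hB_def
  have hB : B.restrictScalars E = Algebra.adjoin E {t, s⁻¹} := by
    rw [hB_def, ← Algebra.adjoin_inv_eq_ofField hS_ne,
      ← Algebra.adjoin_X_inv_eq_restrictScalars, ht, hs]
  obtain rfl : A = B.restrictScalars E := by
    rw [hA, hB, hT, hs_eq, adjoin_pow_div_aeval_eq hS0]
  have hB_pid : IsPrincipalIdealRing B := IsLocalization.isPrincipalIdealRing (Submonoid.powers S)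
  refine ⟨hB, hB_pid, ?_, fun tA TA htA hTA => ?_⟩
  · let := ψ.toAlgebra
    have hψX : algebraMap F[X] (RatFunc E) X = T := by simp [RingHom.algebraMap_toAlgebra, hψ]
    exact B.mem_iff_isIntegral
      (fun r => by
        rw [RingHom.algebraMap_toAlgebra, hψ, ← Subalgebra.mem_restrictScalars E, hA]
        exact Algebra.adjoin_mono (by simp) (eval₂_algebraMap_comp_mem_adjoin T r))
      (fun b hb => isIntegral_of_mem_adjoin_pow_eq_mul_aeval hSdeg
        (hψX ▸ isIntegral_algebraMap) (hs_eq ▸ htds) (hA ▸ hb))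
  · exact Subalgebra.totally_ramified_of_mul_eq_pow (B := B) prime_X
      (X_dvd_iff.not.mpr (by rw [hS0]; exact one_ne_zero)) tA TA (htA.trans ht)
      (by rw [hTA, htA, ← hs, htds])

set_option maxHeartbeats 1000000 in
set_option synthInstance.maxHeartbeats 1000000 in
/-- Let `R = 𝔽_{q^{dℓ}}[t̃]` and `S = ∏_{i=1}^{d-1}(1 − (ε^{q^i} − ε) t̃) ∈ R`, where `ε`
generates `𝔽_{q^d}` over `𝔽_q`, and set `T̃ := t̃^d / S` in the fraction field
`𝔽_{q^{dℓ}}(t̃)`.  Then `R[1/S] = 𝔽_{q^{dℓ}}[T̃][t̃]`, this ring is a principal ideal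
domain, and it equals the integral closure of `𝔽_q[T̃]` in `𝔽_{q^{dℓ}}(t̃)`.  Moreover,
the prime `(T̃)` of `𝔽_q[T̃]` is totally ramified in this ring: the ideal `(t̃)` is the
unique prime above `(T̃)`, and `(T̃) = (t̃)^d`. -/
theorem restriction_of_scalars_ring (F E : Type*) [Field F] [Fintype F] [Field E]
    [Fintype E] [Algebra F E]
    (q d ℓ : ℕ) (hq : q = Fintype.card F) (hd : 0 < d) (hℓ : 0 < ℓ)
    (hE : Fintype.card E = q ^ (d * ℓ))
    (ε : E) (hεd : ε ^ q ^ d = ε)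
    (hdist : ∀ i j, i < d → j < d → ε ^ q ^ i = ε ^ q ^ j → i = j)
    (S : E[X]) (hS : S = ∏ i ∈ Finset.Ioo 0 d, (1 - C (ε ^ q ^ i - ε) * X))
    (t s T : RatFunc E)
    (ht : t = algebraMap E[X] (RatFunc E) X)
    (hs : s = algebraMap E[X] (RatFunc E) S)
    (hT : T = t ^ d / s)
    (ψ : Polynomial F →+* RatFunc E)
    (hψ : ψ = Polynomial.eval₂RingHom
      (((algebraMap E (RatFunc E)).comp (algebraMap F E)) : F →+* RatFunc E) T)
    (A : Subalgebra E (RatFunc E)) (hA : A = Algebra.adjoin E {t, T}) :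
    A = Algebra.adjoin E {t, s⁻¹} ∧
    IsPrincipalIdealRing A ∧
    (∀ x : RatFunc E, x ∈ A ↔ ψ.IsIntegralElem x) ∧
    (∀ tA TA : A, (tA : RatFunc E) = t → (TA : RatFunc E) = T →
      ((Ideal.span {tA}).IsPrime ∧
        (∀ Q : Ideal A, Q.IsPrime → TA ∈ Q → Q = Ideal.span {tA}) ∧
        Ideal.span {TA} = Ideal.span {tA} ^ d)) :=
  restriction_of_scalars_ring_general F E q d hd ε S hS t s T ht hs hT ψ hψ A hA
end
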